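/- Let T₁ ≥ T₂ ≥ ⋯ be a non-increasing sequence of positive contractions on a separable Hilbert space H with strong limit T, and suppose T_{n₀} is compact for some n₀. Then S_n = T_n ⋯ T₁ converges strongly to the projection P onto the fixed-point space of T. -/

import Mathlib

/-!
A vector fixed by `Tlim` is fixed by every `T n`: its quadratic form under `T n` is squeezed
between `‖ξ‖²` and `⟨Tlim ξ, ξ⟩ = ‖ξ‖²`, and `‖T ξ - ξ‖² ≤ ‖ξ‖² - re ⟨T ξ, ξ⟩` for `0 ≤ T ≤ 1`.
So `S n` is the identity on the range of `P` and, the `T n` being self-adjoint, maps `ker P`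
into itself. On `ker P` the compactness of `T n₀` yields a uniform gap `⟨T N x, x⟩ ≤ c ‖x‖²`
with `c < 1`: otherwise unit vectors `u_k ∈ ker P` with `⟨T k u_k, u_k⟩ → 1` are almost fixed
by every `T m`, and `T n₀` extracts from them a limit point of norm one in `ker P` that is
fixed by `Tlim`, i.e. lies in the range of `P`. Since `‖T n x‖² ≤ ⟨T n x, x⟩ ≤ ⟨T N x, x⟩`
for `n ≥ N`, the `S n` then contract `ker P` geometrically.
-/

open Filter Topology

noncomputable section

local notation "⟪" x ", " y "⟫" => @inner ℂ _ _ x y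

variable {H : Type*} [NormedAddCommGroup H] [InnerProductSpace ℂ H] [CompleteSpace H]

open ContinuousLinearMap RCLike

/-- With `s = √a`, `a * a = s * a * s` and `a = s * 1 * s`, so this is `a ≤ 1` conjugated by `s`. -/
theorem mul_self_le_self_of_le_one {A : Type*} [CStarAlgebra A] [PartialOrder A]
    [StarOrderedRing A] {a : A} (h0 : 0 ≤ a) (h1 : a ≤ 1) : a * a ≤ a := by
  set s := CFC.sqrt a
  have hss : s * s = a := CFC.sqrt_mul_sqrt_self a h0
  have hs : IsSelfAdjoint s := .of_nonneg (CFC.sqrt_nonneg a)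
  have := star_left_conjugate_le_conjugate h1 s
  rw [hs.star_eq, mul_one, hss] at this
  calc a * a = s * a * s := by rw [← hss]; noncomm_ring
    _ ≤ a := this

theorem tendsto_zero_of_norm_sq_tendsto_zero {ι E : Type*} [SeminormedAddGroup E] {l : Filter ι}
    {v : ι → E} (h : Tendsto (fun i => ‖v i‖ ^ 2) l (𝓝 0)) : Tendsto v l (𝓝 0) := by
  rw [tendsto_zero_iff_norm_tendsto_zero]
  simpa [Real.sqrt_sq (norm_nonneg _)] using h.sqrt

theorem tendsto_zero_of_norm_sq_succ_le {E : Type*} [SeminormedAddCommGroup E] {v : ℕ → E}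
    {c : ℝ} (hc : c < 1) (h : ∀ᶠ n in atTop, ‖v (n + 1)‖ ^ 2 ≤ c * ‖v n‖ ^ 2) :
    Tendsto v atTop (𝓝 0) := by
  refine tendsto_zero_of_norm_sq_tendsto_zero
    (summable_of_ratio_norm_eventually_le (f := fun n => ‖v n‖ ^ 2) hc ?_).tendsto_atTop_zero
  simpa only [Real.norm_eq_abs, abs_pow, abs_norm] using h

theorem IsCompactOperator.exists_subseq_tendsto_of_tendsto_apply_sub {𝕜 E : Type*}
    [NontriviallyNormedField 𝕜] [NormedAddCommGroup E] [NormedSpace 𝕜 E] {A : E →L[𝕜] E}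
    (hA : IsCompactOperator A) {u : ℕ → E} {r : ℝ} (hu : ∀ k, ‖u k‖ ≤ r)
    (h : Tendsto (fun k => A (u k) - u k) atTop (𝓝 0)) :
    ∃ a, ∃ φ : ℕ → ℕ, StrictMono φ ∧ Tendsto (fun k => u (φ k)) atTop (𝓝 a) := by
  obtain ⟨K, hK, hAK⟩ :=
    IsCompactOperator.image_closedBall_subset_compact (f := (A : E →ₗ[𝕜] E)) hA r
  obtain ⟨a, -, φ, hφ, hconv⟩ :=
    hK.tendsto_subseq fun k => hAK ⟨u k, mem_closedBall_zero_iff.mpr (hu k), rfl⟩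
  refine ⟨a, φ, hφ, ?_⟩
  simpa using hconv.sub (h.comp hφ.tendsto_atTop)

theorem mapsTo_of_succ_eq_comp {R E : Type*} [Semiring R] [AddCommMonoid E] [Module R E]
    [TopologicalSpace E] {S T : ℕ → E →L[R] E} (hS0 : S 0 = T 0)
    (hSsucc : ∀ n, S (n + 1) = T (n + 1) ∘L S n) {M : Set E} (hM : ∀ n, Set.MapsTo (T n) M M) :
    ∀ n, Set.MapsTo (S n) M M
  | 0 => by rw [hS0]; exact hM 0
  | n + 1 => by
    rw [hSsucc, coe_comp]
    exact (hM (n + 1)).comp (mapsTo_of_succ_eq_comp hS0 hSsucc hM n)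

namespace ContinuousLinearMap

section RCLike

open scoped InnerProductSpace

variable {𝕜 E : Type*} [RCLike 𝕜] [NormedAddCommGroup E] [InnerProductSpace 𝕜 E]
  {A B : E →L[𝕜] E}

theorem re_inner_le_re_inner_of_le (h : A ≤ B) (x : E) : re ⟪A x, x⟫_𝕜 ≤ re ⟪B x, x⟫_𝕜 := by
  have := ((le_def A B).mp h).re_inner_nonneg_left x
  rw [sub_apply, inner_sub_left, map_sub] at this
  linarith

theorem re_inner_le_one_of_le_one (h1 : A ≤ 1) {x : E} (hx : ‖x‖ = 1) : re ⟪A x, x⟫_𝕜 ≤ 1 := by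
  simpa [inner_self_eq_norm_sq, hx] using re_inner_le_re_inner_of_le h1 x

theorem exists_smul_norm_eq_one_lt_re_inner {x : E} {c : ℝ} (h : c * ‖x‖ ^ 2 < re ⟪A x, x⟫_𝕜) :
    ∃ z : 𝕜, ‖z • x‖ = 1 ∧ c < re ⟪A (z • x), z • x⟫_𝕜 := by
  have hx : 0 < ‖x‖ := norm_pos_iff.mpr (by rintro rfl; simp at h)
  refine ⟨(‖x‖⁻¹ : 𝕜), ?_, ?_⟩
  · rw [norm_smul, norm_inv, norm_ofReal, abs_of_pos hx, inv_mul_cancel₀ hx.ne']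
  · have := A.reApplyInnerSelf_smul x (c := (‖x‖⁻¹ : 𝕜))
    simp only [reApplyInnerSelf_apply] at this
    rw [this, norm_inv, norm_ofReal, abs_of_pos hx, inv_pow,
      ← div_eq_inv_mul, lt_div_iff₀ (by positivity)]
    exact h

theorem tendsto_re_inner_of_tendsto_re_inner_diag {T : ℕ → E →L[𝕜] E} (hcontr : ∀ n, T n ≤ 1)
    (hanti : Antitone T) {u : ℕ → E} (hu : ∀ k, ‖u k‖ = 1)
    (h : Tendsto (fun k => re ⟪T k (u k), u k⟫_𝕜) atTop (𝓝 1)) (m : ℕ) :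
    Tendsto (fun k => re ⟪T m (u k), u k⟫_𝕜) atTop (𝓝 1) :=
  tendsto_of_tendsto_of_tendsto_of_le_of_le' h tendsto_const_nhds
    (eventually_atTop.mpr ⟨m, fun k hk => re_inner_le_re_inner_of_le (hanti hk) (u k)⟩)
    (Eventually.of_forall fun k => re_inner_le_one_of_le_one (hcontr m) (hu k))

end RCLike

variable {A : H →L[ℂ] H}

theorem norm_apply_sq_le_re_inner (h0 : 0 ≤ A) (h1 : A ≤ 1) (x : H) :
    ‖A x‖ ^ 2 ≤ re ⟪A x, x⟫ := by
  have hAA : ⟪A (A x), x⟫ = ⟪A x, A x⟫ := (IsSelfAdjoint.of_nonneg h0).isSymmetric (A x) x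
  have := re_inner_le_re_inner_of_le (mul_self_le_self_of_le_one h0 h1) x
  rwa [mul_apply_eq_comp, hAA, inner_self_eq_norm_sq] at this

theorem norm_apply_sub_self_sq_le (h0 : 0 ≤ A) (h1 : A ≤ 1) (x : H) :
    ‖A x - x‖ ^ 2 ≤ ‖x‖ ^ 2 - re ⟪A x, x⟫ := by
  rw [@norm_sub_sq ℂ]
  linarith [norm_apply_sq_le_re_inner h0 h1 x]

theorem apply_eq_self_of_norm_sq_le_re_inner (h0 : 0 ≤ A) (h1 : A ≤ 1) {x : H}
    (hx : ‖x‖ ^ 2 ≤ re ⟪A x, x⟫) : A x = x := by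
  have := norm_apply_sub_self_sq_le h0 h1 x
  rw [← sub_eq_zero, ← norm_eq_zero]
  nlinarith [norm_nonneg (A x - x)]

theorem tendsto_apply_sub_self_of_re_inner_tendsto_one (h0 : 0 ≤ A) (h1 : A ≤ 1) {ι : Type*}
    {l : Filter ι} {u : ι → H} (hu : ∀ i, ‖u i‖ = 1)
    (h : Tendsto (fun i => re ⟪A (u i), u i⟫) l (𝓝 1)) :
    Tendsto (fun i => A (u i) - u i) l (𝓝 0) := by
  refine tendsto_zero_of_norm_sq_tendsto_zero (squeeze_zero (fun _ => sq_nonneg _)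
    (fun i => norm_apply_sub_self_sq_le h0 h1 (u i)) ?_)
  simpa [hu] using (tendsto_const_nhds (x := (1 : ℝ))).sub h

theorem apply_mem_ker_of_isIdempotentElem {P : H →L[ℂ] H} (hP : IsIdempotentElem P)
    (hPsa : IsSelfAdjoint P) (hA : IsSelfAdjoint A) (hfix : ∀ y, P y = y → A y = y) {x : H}
    (hx : P x = 0) : P (A x) = 0 := by
  set w := P (A x)
  have hPw : P w = w := by rw [← mul_apply_eq_comp, hP]
  have hAw : A w = w := hfix w hPw
  have : ⟪w, w⟫ = 0 :=
    calc ⟪w, w⟫ = ⟪A x, P w⟫ := hPsa.isSymmetric (A x) w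
      _ = ⟪x, A w⟫ := by rw [hPw, ← hAw, hAw]; exact hA.isSymmetric x w
      _ = ⟪P x, A x⟫ := by rw [hAw]; exact (hPsa.isSymmetric x (A x)).symm
      _ = 0 := by rw [hx, inner_zero_left]
  exact inner_self_eq_zero.mp this

end ContinuousLinearMap

section Antitone

variable {T : ℕ → H →L[ℂ] H} {Tlim : H →L[ℂ] H}

theorem apply_eq_self_of_limit_apply_eq_self (hpos : ∀ n, 0 ≤ T n) (hcontr : ∀ n, T n ≤ 1)
    (hanti : Antitone T) (hTlim : ∀ x, Tendsto (fun n => T n x) atTop (𝓝 (Tlim x))) {x : H}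
    (hx : Tlim x = x) (n : ℕ) : T n x = x := by
  refine apply_eq_self_of_norm_sq_le_re_inner (hpos n) (hcontr n) ?_
  have hlim : Tendsto (fun m => re ⟪T m x, x⟫) atTop (𝓝 (‖x‖ ^ 2)) := by
    have := (continuous_re.tendsto _).comp ((hTlim x).inner (𝕜 := ℂ) (tendsto_const_nhds (x := x)))
    rwa [hx, inner_self_eq_norm_sq] at this
  exact le_of_tendsto hlim
    (eventually_atTop.mpr ⟨n, fun m hm => re_inner_le_re_inner_of_le (hanti hm) x⟩)

theorem exists_re_inner_le_mul_norm_sq_of_apply_eq_zero (hpos : ∀ n, 0 ≤ T n)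
    (hcontr : ∀ n, T n ≤ 1) (hanti : Antitone T) {n₀ : ℕ} (hcompact : IsCompactOperator (T n₀))
    (hTlim : ∀ x, Tendsto (fun n => T n x) atTop (𝓝 (Tlim x))) {P : H →L[ℂ] H}
    (hPfix : ∀ x, Tlim x = x → P x = x) :
    ∃ N, ∃ c < 1, ∀ x, P x = 0 → re ⟪T N x, x⟫ ≤ c * ‖x‖ ^ 2 := by
  by_contra! h
  have hu : ∀ k : ℕ, ∃ u, P u = 0 ∧ ‖u‖ = 1 ∧ 1 - 1 / ((k : ℝ) + 1) < re ⟪T k u, u⟫ := by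
    intro k
    obtain ⟨x, hPx, hx⟩ := h k (1 - 1 / ((k : ℝ) + 1)) (by simp; positivity)
    obtain ⟨z, hz, hzx⟩ := exists_smul_norm_eq_one_lt_re_inner hx
    exact ⟨z • x, by rw [map_smul, hPx, smul_zero], hz, hzx⟩
  choose u hPu hu hqu using hu
  have hdiag : Tendsto (fun k => re ⟪T k (u k), u k⟫) atTop (𝓝 1) := by
    refine tendsto_of_tendsto_of_tendsto_of_le_of_le ?_ tendsto_const_nhds (fun k => (hqu k).le)
      (fun k => re_inner_le_one_of_le_one (hcontr k) (hu k))
    simpa using (tendsto_const_nhds (x := (1 : ℝ))).sub tendsto_one_div_add_atTop_nhds_zero_nat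
  have hsub : ∀ m, Tendsto (fun k => T m (u k) - u k) atTop (𝓝 0) := fun m =>
    tendsto_apply_sub_self_of_re_inner_tendsto_one (hpos m) (hcontr m) hu
      (tendsto_re_inner_of_tendsto_re_inner_diag hcontr hanti hu hdiag m)
  obtain ⟨a, φ, hφ, ha⟩ :=
    hcompact.exists_subseq_tendsto_of_tendsto_apply_sub (fun k => (hu k).le) (hsub n₀)
  have hTa : ∀ m, T m a = a := fun m => sub_eq_zero.mp <| tendsto_nhds_unique
    ((((T m).continuous.tendsto a).comp ha).sub ha) ((hsub m).comp hφ.tendsto_atTop)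
  have hPa : P a = 0 :=
    tendsto_nhds_unique ((P.continuous.tendsto a).comp ha) (by simp [Function.comp_def, hPu])
  have hna : ‖a‖ = 1 := tendsto_nhds_unique ha.norm (by simp [hu])
  rw [← hPfix a (tendsto_nhds_unique (hTlim a) (by simp [hTa])), hPa, norm_zero] at hna
  exact zero_ne_one hna

end Antitone

theorem stmt17_general
    (T : ℕ → H →L[ℂ] H) (hpos : ∀ n, 0 ≤ T n) (hcontr : ∀ n, T n ≤ 1)
    (hmono : ∀ n, T (n + 1) ≤ T n) (n₀ : ℕ) (hcompact : IsCompactOperator (T n₀))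
    (S : ℕ → H →L[ℂ] H) (hS0 : S 0 = T 0) (hSsucc : ∀ n, S (n + 1) = T (n + 1) ∘L S n)
    (Tlim : H →L[ℂ] H) (hTlim : ∀ ξ : H, Tendsto (fun n => T n ξ) atTop (nhds (Tlim ξ)))
    (P : H →L[ℂ] H) (hP : IsIdempotentElem P) (hPsa : IsSelfAdjoint P)
    (hPfix : ∀ ξ : H, P ξ = ξ ↔ Tlim ξ = ξ) :
    ∀ ξ : H, Tendsto (fun n => S n ξ) atTop (nhds (P ξ)) := by
  have hanti : Antitone T := antitone_nat_of_succ_le hmono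
  have hfix : ∀ n y, P y = y → T n y = y := fun n y hy =>
    apply_eq_self_of_limit_apply_eq_self hpos hcontr hanti hTlim ((hPfix y).mp hy) n
  have hker : ∀ n, Set.MapsTo (T n) {x | P x = 0} {x | P x = 0} := fun n _ hx =>
    apply_mem_ker_of_isIdempotentElem hP hPsa (.of_nonneg (hpos n)) (hfix n) hx
  obtain ⟨N, c, hc, hgap⟩ := exists_re_inner_le_mul_norm_sq_of_apply_eq_zero hpos hcontr hanti
    hcompact hTlim fun x => (hPfix x).mpr
  intro ξ
  have hPPξ : P (P ξ) = P ξ := by rw [← mul_apply_eq_comp, hP]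
  have hSPξ : ∀ n, S n (P ξ) = P ξ := fun n =>
    mapsTo_of_succ_eq_comp hS0 hSsucc (fun m => Set.mapsTo_singleton.mpr (hfix m _ hPPξ)) n rfl
  have hSker : ∀ n, P (S n (ξ - P ξ)) = 0 := fun n =>
    mapsTo_of_succ_eq_comp hS0 hSsucc hker n (by simp [hPPξ])
  have hdecay : Tendsto (fun n => S n (ξ - P ξ)) atTop (𝓝 0) := by
    refine tendsto_zero_of_norm_sq_succ_le hc (eventually_atTop.mpr ⟨N, fun n hn => ?_⟩)
    rw [hSsucc, comp_apply]
    exact (norm_apply_sq_le_re_inner (hpos _) (hcontr _) _).trans <|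
      (re_inner_le_re_inner_of_le (hanti (by omega)) _).trans (hgap _ (hSker n))
  simpa [hSPξ] using hdecay.const_add (P ξ)

theorem stmt17 [TopologicalSpace.SeparableSpace H]
    (T : ℕ → H →L[ℂ] H) (hpos : ∀ n, 0 ≤ T n) (hcontr : ∀ n, T n ≤ 1)
    (hmono : ∀ n, T (n + 1) ≤ T n) (n₀ : ℕ) (hcompact : IsCompactOperator (T n₀))
    (S : ℕ → H →L[ℂ] H) (hS0 : S 0 = T 0) (hSsucc : ∀ n, S (n + 1) = T (n + 1) ∘L S n)
    (Tlim : H →L[ℂ] H) (hTlim : ∀ ξ : H, Tendsto (fun n => T n ξ) atTop (nhds (Tlim ξ)))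
    (P : H →L[ℂ] H) (hP : IsIdempotentElem P) (hPsa : IsSelfAdjoint P)
    (hPfix : ∀ ξ : H, P ξ = ξ ↔ Tlim ξ = ξ) :
    ∀ ξ : H, Tendsto (fun n => S n ξ) atTop (nhds (P ξ)) :=
  stmt17_general T hpos hcontr hmono n₀ hcompact S hS0 hSsucc Tlim hTlim P hP hPsa hPfix
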